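/- arXiv:1803.02160 — 3 statements merged into one kernel-verified Lean document; each statement's English description precedes it below -/
import Mathlib

section
/- Let P be a polygon satisfying the order claim with respect to a clockwise boundary order ≺, and let G be a finite set of guard vertices. For each vertex w, define λ(w) as the first vertex of G (in ≺-order) that sees w and precedes w, when such a vertex exists. Then the set of segments A₁ = { λ(w)w : λ(w) defined } is pairwise non-crossing: no two segments in A₁ cross at an interior point of both. -/
/-- Non-crossing of the segments `(λ(w), w)`.  Vertices of the polygon are linearly
ordered by the clockwise boundary order; `sees` is the (symmetric) visibility relation,
assumed to satisfy the order claim.  `G` is a finite set of guard vertices, and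
`λ` is a partial function (predicate `lamD` for definedness) picking, for each vertex
`w`, the first vertex of `G` that sees `w` and precedes it.  Then no two segments
`(λ(x), x)` and `(λ(y), y)` cross, i.e. `λ(x) < λ(y) < x < y` is impossible. -/
theorem segments_A1_noncrossing {V : Type*} [LinearOrder V]
    (sees : V → V → Prop)
    (hsym : ∀ a b, sees a b → sees b a)
    (horder : ∀ a b c d : V, a < b → b < c → c < d → sees a c → sees b d → sees a d)
    (G : Finset V)
    (lamD : V → Prop) (lam : V → V)
    (hlam1 : ∀ w, lamD w → lam w ∈ G ∧ lam w < w ∧ sees (lam w) w)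
    (hlam2 : ∀ w g, g ∈ G → g < w → sees g w → lamD w ∧ lam w ≤ g) :
    ∀ x y, lamD x → lamD y → ¬ (lam x < lam y ∧ lam y < x ∧ x < y) := by
  rintro x y hx hy ⟨h1, h2, h3⟩
  obtain ⟨hxG, hxlt, hxs⟩ := hlam1 x hx
  obtain ⟨hyG, hylt, hys⟩ := hlam1 y hy
  have hsee : sees (lam x) y := horder _ _ _ _ h1 h2 h3 hxs hys
  have := (hlam2 y (lam x) hxG (h1.trans (h2.trans h3)) hsee).2
  exact absurd h1 (not_lt.mpr this)
end

section
/- Let V be a finite set of points in convex position on a circle, and let A and E be two sets of chords of the circle with endpoints in V such that: (1) the chords in A are pairwise non-crossing, and (2) every chord in E \ A shares its left endpoint with some chord (a,b) ∈ A and its right endpoint lies strictly between a and b, with these 'fans' nested consistently with A. Then the graph (V, A ∪ E) is planar. -/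
/-- A graph is planar if its vertices can be placed at distinct points of the plane and
each edge drawn as a simple arc between its endpoints, such that arcs pass through no
other vertex and two distinct arcs meet only in common endpoints. -/
def GraphIsPlanar {V : Type*} (G : SimpleGraph V) : Prop :=
  ∃ (pos : V → ℝ × ℝ) (arc : V → V → Set (ℝ × ℝ)),
    Function.Injective pos ∧
    (∀ u v, G.Adj u v → ∃ f : ℝ → ℝ × ℝ, ContinuousOn f (Set.Icc 0 1) ∧
      Set.InjOn f (Set.Icc 0 1) ∧ f 0 = pos u ∧ f 1 = pos v ∧
      f '' Set.Icc 0 1 = arc u v) ∧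
    (∀ u v, arc u v = arc v u) ∧
    (∀ u v, G.Adj u v → ∀ w, pos w ∈ arc u v → w = u ∨ w = v) ∧
    (∀ u v u' v', G.Adj u v → G.Adj u' v' → s(u, v) ≠ s(u', v') →
      arc u v ∩ arc u' v' ⊆
        ({pos u, pos v} ∩ {pos u', pos v'} : Set (ℝ × ℝ)))

noncomputable section
open Real Set

def dot (x y : ℝ × ℝ) : ℝ := x.1 * y.1 + x.2 * y.2

def pt (θ : ℝ) : ℝ × ℝ := (Real.cos θ, Real.sin θ)

lemma dot_pt_pt (x y : ℝ) : dot (pt x) (pt y) = Real.cos (x - y) := by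
  simp [dot, pt, Real.cos_sub]

lemma dot_pt_self (x : ℝ) : dot (pt x) (pt x) = 1 := by
  have := Real.cos_sq_add_sin_sq x
  simp [dot, pt]; nlinarith

lemma dot_comb (a b : ℝ) (p q r : ℝ × ℝ) :
    dot (a • p + b • q) r = a * dot p r + b * dot q r := by
  simp [dot, Prod.smul_fst, Prod.smul_snd, smul_eq_mul]; ring

lemma pt_inj {x y : ℝ} (hx0 : 0 ≤ x) (hx1 : x ≤ π) (hy0 : 0 ≤ y) (hy1 : y ≤ π)
    (h : pt x = pt y) : x = y := by
  have h1 : Real.cos x = Real.cos y := congrArg Prod.fst h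
  exact Real.injOn_cos ⟨hx0, hx1⟩ ⟨hy0, hy1⟩ h1

lemma disjoint_of_sep (α β c d : ℝ)
    (h1 : Real.cos (c - (α + β) / 2) < Real.cos ((β - α) / 2))
    (h2 : Real.cos (d - (α + β) / 2) < Real.cos ((β - α) / 2)) :
    segment ℝ (pt α) (pt β) ∩ segment ℝ (pt c) (pt d) = ∅ := by
  ext z
  simp only [Set.mem_inter_iff, Set.mem_empty_iff_false, iff_false, not_and]
  rintro ⟨a, b, ha, hb, hab, rfl⟩ ⟨a', b', ha', hb', hab', heq⟩
  have e1 : dot (a • pt α + b • pt β) (pt ((α + β) / 2)) = Real.cos ((β - α) / 2) := by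
    rw [dot_comb, dot_pt_pt, dot_pt_pt]
    have : α - (α + β) / 2 = -((β - α) / 2) := by ring
    rw [this, Real.cos_neg]
    have : β - (α + β) / 2 = (β - α) / 2 := by ring
    rw [this, ← add_mul, hab, one_mul]
  have e2 : dot (a • pt α + b • pt β) (pt ((α + β) / 2)) < Real.cos ((β - α) / 2) := by
    rw [← heq, dot_comb, dot_pt_pt, dot_pt_pt]
    rcases eq_or_lt_of_le ha' with h | h
    · have : b' = 1 := by linarith
      rw [← h, this]; simpa using h2
    · have k1 : a' * Real.cos (c - (α + β) / 2) < a' * Real.cos ((β - α) / 2) :=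
        mul_lt_mul_of_pos_left h1 h
      have k2 : b' * Real.cos (d - (α + β) / 2) ≤ b' * Real.cos ((β - α) / 2) :=
        mul_le_mul_of_nonneg_left h2.le hb'
      have k3 : (a' + b') * Real.cos ((β - α) / 2) = Real.cos ((β - α) / 2) := by
        rw [hab', one_mul]
      nlinarith
  linarith


lemma dist_sq_pos {p r : ℝ × ℝ} (h : p ≠ r) :
    0 < (r.1 - p.1) ^ 2 + (r.2 - p.2) ^ 2 := by
  rcases eq_or_ne r.1 p.1 with h1 | h1
  · rcases eq_or_ne r.2 p.2 with h2 | h2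
    · exact absurd (Prod.ext h1.symm h2.symm : p = r) h
    · have := sq_pos_of_ne_zero (sub_ne_zero.mpr h2)
      nlinarith [sq_nonneg (r.1 - p.1)]
  · have := sq_pos_of_ne_zero (sub_ne_zero.mpr h1)
    nlinarith [sq_nonneg (r.2 - p.2)]

lemma on_circle_of_seg {p q z : ℝ × ℝ} (hp : dot p p = 1) (hq : dot q q = 1)
    (hpq : p ≠ q) (hz : z ∈ segment ℝ p q) (hzc : dot z z = 1) : z = p ∨ z = q := by
  obtain ⟨a, b, ha, hb, hab, rfl⟩ := hz
  have hD := dist_sq_pos hpq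
  have key : a * b * ((q.1 - p.1) ^ 2 + (q.2 - p.2) ^ 2) = 0 := by
    simp only [dot, Prod.fst_add, Prod.snd_add, Prod.smul_fst, Prod.smul_snd,
      smul_eq_mul] at hzc hp hq
    linear_combination (a^2 + a*b) * hp + (b^2 + a*b) * hq - hzc + (a + b + 1) * hab
  have hab0 : a * b = 0 := by
    rcases mul_eq_zero.1 key with h | h
    · exact h
    · exact absurd h (by linarith)
  rcases mul_eq_zero.1 hab0 with h | h
  · right; have hb1 : b = 1 := by linarith
    rw [h, hb1]; simp
  · left; have ha1 : a = 1 := by linarith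
    rw [h, ha1]; simp

lemma shared_endpoint {p q r : ℝ × ℝ} (hp : dot p p = 1) (hq : dot q q = 1)
    (hr : dot r r = 1) (hpq : p ≠ q) (hpr : p ≠ r) (hqr : q ≠ r) :
    segment ℝ p q ∩ segment ℝ p r ⊆ {p} := by
  rintro z ⟨hz1, hz2⟩
  obtain ⟨a, b, ha, hb, hab, rfl⟩ := hz1
  obtain ⟨a', b', ha', hb', hab', heq⟩ := hz2
  have hc1 : b * (q.1 - p.1) = b' * (r.1 - p.1) := by
    have h1 := congrArg Prod.fst heq
    simp only [Prod.fst_add, Prod.smul_fst, smul_eq_mul] at h1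
    linear_combination p.1 * hab' - p.1 * hab - h1
  have hc2 : b * (q.2 - p.2) = b' * (r.2 - p.2) := by
    have h1 := congrArg Prod.snd heq
    simp only [Prod.snd_add, Prod.smul_snd, smul_eq_mul] at h1
    linear_combination p.2 * hab' - p.2 * hab - h1
  rcases eq_or_lt_of_le hb with h0 | h0
  · have ha1 : a = 1 := by linarith
    simp [← h0, ha1]
  · exfalso
    have hbne : b ≠ 0 := ne_of_gt h0
    set c : ℝ := b' / b with hc
    have e1 : c * (r.1 - p.1) = q.1 - p.1 := by
      rw [hc, div_mul_eq_mul_div, div_eq_iff hbne]; linarith [hc1]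
    have e2 : c * (r.2 - p.2) = q.2 - p.2 := by
      rw [hc, div_mul_eq_mul_div, div_eq_iff hbne]; linarith [hc2]
    have hq1 : q.1 = p.1 + c * (r.1 - p.1) := by rw [e1]; ring
    have hq2 : q.2 = p.2 + c * (r.2 - p.2) := by rw [e2]; ring
    have hD := dist_sq_pos hpr
    have key : c * (c - 1) * ((r.1 - p.1) ^ 2 + (r.2 - p.2) ^ 2) = 0 := by
      simp only [dot] at hp hq hr
      rw [hq1, hq2] at hq
      linear_combination hq + (c - 1) * hp - c * hr
    rcases mul_eq_zero.1 key with h | h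
    · rcases mul_eq_zero.1 h with h | h
      · have hb'0 : b' = 0 := by
          rcases (div_eq_zero_iff.1 h) with h' | h'
          · exact h'
          · exact absurd h' hbne
        rw [hb'0, zero_mul] at hc1 hc2
        have e1' : q.1 = p.1 := by
          rcases mul_eq_zero.1 hc1 with h' | h'
          · exact absurd h' hbne
          · linarith
        have e2' : q.2 = p.2 := by
          rcases mul_eq_zero.1 hc2 with h' | h'
          · exact absurd h' hbne
          · linarith
        exact hpq (Prod.ext e1' e2').symm
      · apply hqr
        have hc1' : c = 1 := by linarith
        rw [hc1'] at hq1 hq2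
        exact Prod.ext (by linarith) (by linarith)
    · linarith

lemma disjoint_far {ta tb tc td : ℝ} (h0 : 0 < ta) (h1 : ta < tb) (h2 : tb < tc)
    (h3 : tc < td) (h4 : td < 1) :
    segment ℝ (pt ta) (pt tb) ∩ segment ℝ (pt tc) (pt td) = ∅ := by
  have hpi := Real.pi_gt_three
  apply disjoint_of_sep
  · exact Real.cos_lt_cos_of_nonneg_of_le_pi (by linarith) (by linarith) (by linarith)
  · exact Real.cos_lt_cos_of_nonneg_of_le_pi (by linarith) (by linarith) (by linarith)

lemma disjoint_nested {ta tb tc td : ℝ} (h0 : 0 < ta) (h1 : ta < tc) (h2 : tc < td)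
    (h3 : td < tb) (h4 : tb < 1) :
    segment ℝ (pt ta) (pt tb) ∩ segment ℝ (pt tc) (pt td) = ∅ := by
  have hpi := Real.pi_gt_three
  rw [Set.inter_comm]
  apply disjoint_of_sep
  · have hrw : ta - (tc + td) / 2 = -((tc + td) / 2 - ta) := by ring
    rw [hrw, Real.cos_neg]
    exact Real.cos_lt_cos_of_nonneg_of_le_pi (by linarith) (by linarith) (by linarith)
  · exact Real.cos_lt_cos_of_nonneg_of_le_pi (by linarith) (by linarith) (by linarith)

end

/-- Planarity of a non-crossing chord family together with its fans: `V` is a finite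
linearly ordered vertex set (points in convex position on a circle, in this order);
`A` and `E` are sets of chords `(a,b)` with `a < b`; the chords of `A` are pairwise
non-crossing, and every chord of `E \ A` shares its left endpoint with some chord
`(a,b) ∈ A`, has its right endpoint strictly between `a` and `b`, and `(a,b)` is the
minimal chord of `A` whose interval strictly contains that right endpoint (the fans are
nested consistently with `A`).  Then the graph `(V, A ∪ E)` is planar. -/
theorem fan_graph_planar {V : Type*} [Fintype V] [LinearOrder V]
    (A E : Set (V × V))
    (hA : ∀ p ∈ A, p.1 < p.2) (hE : ∀ p ∈ E, p.1 < p.2)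
    (hAnc : ∀ p ∈ A, ∀ q ∈ A, ¬ (p.1 < q.1 ∧ q.1 < p.2 ∧ p.2 < q.2))
    (hfan : ∀ p ∈ E, p ∉ A → ∃ q ∈ A, q.1 = p.1 ∧ q.1 < p.2 ∧ p.2 < q.2 ∧
      ∀ r ∈ A, r.1 < p.2 → p.2 < r.2 → r.1 ≤ q.1 ∧ q.2 ≤ r.2) :
    GraphIsPlanar (SimpleGraph.fromRel (fun a b => (a, b) ∈ A ∪ E)) := by
  classical
  set n := Fintype.card V with hn
  have e : Fin n ≃o V := monoEquivOfFin V rfl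
  set θ : V → ℝ := fun v => ((e.symm v : ℕ) + 1) / (n + 1) with hθdef
  have hden : (0:ℝ) < n + 1 := by positivity
  have hθmono : StrictMono θ := by
    intro x y h
    have h2 : (e.symm x : ℕ) < (e.symm y : ℕ) := e.symm.strictMono h
    have h3 : ((e.symm x : ℕ) : ℝ) < ((e.symm y : ℕ) : ℝ) := by exact_mod_cast h2
    simp only [hθdef]
    rw [div_lt_div_iff₀ hden hden]
    nlinarith
  have hθ0 : ∀ v, 0 < θ v := by intro v; simp only [hθdef]; positivity
  have hθ1 : ∀ v, θ v < 1 := by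
    intro v
    simp only [hθdef]
    rw [div_lt_one hden]
    have h4 : (e.symm v : ℕ) < n := (e.symm v).isLt
    have h5 : ((e.symm v : ℕ) : ℝ) < n := by exact_mod_cast h4
    linarith
  have hpi := Real.pi_gt_three
  set P : V → ℝ × ℝ := fun v => pt (θ v) with hPdef
  have hPinj : Function.Injective P := by
    intro x y h
    have hθeq : θ x = θ y := by
      apply pt_inj (hθ0 x).le (by linarith [hθ1 x]) (hθ0 y).le (by linarith [hθ1 y])
      exact h
    exact hθmono.injective hθeq
  have hPne : ∀ {x y : V}, x ≠ y → P x ≠ P y := fun h h' => h (hPinj h')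
  have hPcirc : ∀ v, dot (P v) (P v) = 1 := fun v => dot_pt_self (θ v)
  have hUE : ∀ p ∈ A ∪ E, p.1 < p.2 := by
    rintro p (h | h)
    · exact hA p h
    · exact hE p h
  -- no interleaving
  have noX : ∀ p ∈ A ∪ E, ∀ q ∈ A ∪ E, ¬ (p.1 < q.1 ∧ q.1 < p.2 ∧ p.2 < q.2) := by
    rintro p hp q hq ⟨h1, h2, h3⟩
    by_cases hpA : p ∈ A
    · by_cases hqA : q ∈ A
      · exact hAnc p hpA q hqA ⟨h1, h2, h3⟩
      · have hqE : q ∈ E := hq.resolve_left hqA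
        obtain ⟨q₁, hq₁A, hq₁1, hq₁2, hq₁3, _⟩ := hfan q hqE hqA
        refine hAnc p hpA q₁ hq₁A ⟨?_, ?_, ?_⟩
        · rw [hq₁1]; exact h1
        · rw [hq₁1]; exact h2
        · exact h3.trans hq₁3
    · have hpE : p ∈ E := hp.resolve_left hpA
      obtain ⟨p₁, hp₁A, hp₁1, hp₁2, hp₁3, hmin⟩ := hfan p hpE hpA
      by_cases hqA : q ∈ A
      · have h4 := (hmin q hqA h2 h3).1
        rw [hp₁1] at h4; exact h1.not_ge h4
      · have hqE : q ∈ E := hq.resolve_left hqA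
        obtain ⟨q₁, hq₁A, hq₁1, hq₁2, hq₁3, _⟩ := hfan q hqE hqA
        have h4 := (hmin q₁ hq₁A (by rw [hq₁1]; exact h2) (h3.trans hq₁3)).1
        rw [hp₁1, hq₁1] at h4; exact h1.not_ge h4
  set G := SimpleGraph.fromRel (fun a b : V => (a, b) ∈ A ∪ E) with hG
  have hnorm : ∀ u v : V, G.Adj u v →
      ∃ a b : V, a < b ∧ (a, b) ∈ A ∪ E ∧ s(u, v) = s(a, b) := by
    intro u v h
    rw [hG, SimpleGraph.fromRel_adj] at h
    obtain ⟨hne, h | h⟩ := h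
    · exact ⟨u, v, hUE _ h, h, rfl⟩
    · exact ⟨v, u, hUE _ h, h, Sym2.eq_swap⟩
  -- main chord separation claim (ordered version)
  have claim : ∀ a b c d : V, a < b → c < d → (a, b) ∈ A ∪ E → (c, d) ∈ A ∪ E →
      ¬ (a = c ∧ b = d) → a ≤ c →
      segment ℝ (P a) (P b) ∩ segment ℝ (P c) (P d) ⊆
        ({P a, P b} ∩ {P c, P d} : Set (ℝ × ℝ)) := by
    intro a b c d hab hcd habUE hcdUE hne hac
    rcases eq_or_lt_of_le hac with heq | hlt
    · -- a = c : shared left endpoint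
      subst heq
      have hbd : b ≠ d := fun h => hne ⟨rfl, h⟩
      have hsub := shared_endpoint (hPcirc a) (hPcirc b) (hPcirc d)
        (hPne hab.ne) (hPne hcd.ne) (hPne hbd)
      intro z hz
      have hz' : z = P a := hsub hz
      exact ⟨by rw [hz']; exact Or.inl rfl, by rw [hz']; exact Or.inl rfl⟩
    · rcases lt_trichotomy b c with h | h | h
      · -- disjoint intervals
        rw [disjoint_far (hθ0 a) (hθmono hab) (hθmono h) (hθmono hcd) (hθ1 d)]
        exact Set.empty_subset _
      · -- b = c : shared endpoint b
        subst h
        rw [segment_symm ℝ (P a) (P b)]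
        have hsub := shared_endpoint (hPcirc b) (hPcirc a) (hPcirc d)
          (hPne hab.ne') (hPne hcd.ne) (hPne (hlt.trans hcd).ne)
        intro z hz
        have hz' : z = P b := hsub hz
        exact ⟨by rw [hz']; exact Or.inr rfl, by rw [hz']; exact Or.inl rfl⟩
      · rcases lt_trichotomy b d with h' | h' | h'
        · -- interleaved : impossible
          exact absurd ⟨hlt, h, h'⟩ (noX (a, b) habUE (c, d) hcdUE)
        · -- b = d : shared endpoint b
          subst h'
          rw [segment_symm ℝ (P a) (P b), segment_symm ℝ (P c) (P b)]
          have hsub := shared_endpoint (hPcirc b) (hPcirc a) (hPcirc c)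
            (hPne hab.ne') (hPne hcd.ne') (hPne hlt.ne)
          intro z hz
          have hz' : z = P b := hsub hz
          exact ⟨by rw [hz']; exact Or.inr rfl, by rw [hz']; exact Or.inr rfl⟩
        · -- nested
          rw [disjoint_nested (hθ0 a) (hθmono hlt) (hθmono hcd) (hθmono h') (hθ1 b)]
          exact Set.empty_subset _
  refine ⟨P, fun u v => segment ℝ (P u) (P v), hPinj, ?_, ?_, ?_, ?_⟩
  · -- parameterizations
    intro u v hadj
    refine ⟨fun t => P u + t • (P v - P u), ?_, ?_, by simp, by simp, ?_⟩
    · exact (continuous_const.add (continuous_id.smul continuous_const)).continuousOn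
    · intro t1 _ t2 _ h
      have h1 : t1 • (P v - P u) = t2 • (P v - P u) := by
        have := h; simpa using this
      have h2 : (t1 - t2) • (P v - P u) = 0 := by
        rw [sub_smul, h1, sub_self]
      rcases smul_eq_zero.1 h2 with h3 | h3
      · exact sub_eq_zero.1 h3
      · exact absurd (sub_eq_zero.1 h3) (hPne hadj.ne')
    · exact (segment_eq_image' ℝ (P u) (P v)).symm
  · exact fun u v => segment_symm ℝ (P u) (P v)
  · -- arcs through no other vertex
    intro u v hadj w hw
    have := on_circle_of_seg (hPcirc u) (hPcirc v) (hPne hadj.ne) hw (hPcirc w)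
    rcases this with h | h
    · exact Or.inl (hPinj h)
    · exact Or.inr (hPinj h)
  · -- crossing condition
    intro u v u' v' hadj hadj' hs
    obtain ⟨a, b, hab, habUE, hsym⟩ := hnorm u v hadj
    obtain ⟨c, d, hcd, hcdUE, hsym'⟩ := hnorm u' v' hadj'
    have harc : segment ℝ (P u) (P v) = segment ℝ (P a) (P b) := by
      rcases Sym2.eq_iff.1 hsym with ⟨rfl, rfl⟩ | ⟨rfl, rfl⟩
      · rfl
      · exact segment_symm ℝ _ _
    have hset : ({P u, P v} : Set (ℝ × ℝ)) = {P a, P b} := by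
      rcases Sym2.eq_iff.1 hsym with ⟨rfl, rfl⟩ | ⟨rfl, rfl⟩
      · rfl
      · exact Set.pair_comm _ _
    have harc' : segment ℝ (P u') (P v') = segment ℝ (P c) (P d) := by
      rcases Sym2.eq_iff.1 hsym' with ⟨rfl, rfl⟩ | ⟨rfl, rfl⟩
      · rfl
      · exact segment_symm ℝ _ _
    have hset' : ({P u', P v'} : Set (ℝ × ℝ)) = {P c, P d} := by
      rcases Sym2.eq_iff.1 hsym' with ⟨rfl, rfl⟩ | ⟨rfl, rfl⟩
      · rfl
      · exact Set.pair_comm _ _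
    show segment ℝ (P u) (P v) ∩ segment ℝ (P u') (P v') ⊆
      ({P u, P v} ∩ {P u', P v'} : Set (ℝ × ℝ))
    rw [harc, harc', hset, hset']
    have hne : ¬ (a = c ∧ b = d) := by
      rintro ⟨rfl, rfl⟩
      exact hs (hsym.trans hsym'.symm)
    rcases le_total a c with hac | hca
    · exact claim a b c d hab hcd habUE hcdUE hne hac
    · have hne' : ¬ (c = a ∧ d = b) := fun ⟨h1, h2⟩ => hne ⟨h1.symm, h2.symm⟩
      have h := claim c d a b hcd hab hcdUE habUE hne' hca
      intro z hz
      exact ⟨(h ⟨hz.2, hz.1⟩).2, (h ⟨hz.2, hz.1⟩).1⟩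
end

section
/- Key step of the locality lemma: let x be a vertex with λ(x) defined, and suppose z is a vertex of R ∪ B seeing x with λ(x) ≺ z ≺ x, chosen minimal in the order ≺ among such vertices with color different from col(λ(x)). Let (λ(y), y) be the segment of A₁ with λ(x) ⪯ λ(y) ≺ z ≺ y ⪯ x associated with z. Then λ(y) sees x. -/
/-- Key step of the locality lemma.  Vertices are linearly ordered by the clockwise
boundary order, `sees` is the symmetric visibility relation satisfying the order claim,
`R` and `B` are the red and blue guard sets, and `λ` (partial function, definedness
predicate `lamD`) takes each vertex `w` to the first vertex of `R ∪ B` preceding and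
seeing `w`.  Let `x` be a vertex with `λ(x)` defined, let `z ∈ R ∪ B` see `x` with
`λ(x) ≺ z ≺ x`, chosen `≺`-minimal among such vertices of color different from
`col(λ(x))`, and let `(λ(y), y)` be the segment of `A₁` associated with `z`, so that
`λ(x) ⪯ λ(y) ≺ z ≺ y ⪯ x`.  Then `λ(y)` sees `x`. -/
theorem locality_key_step {V : Type*} [LinearOrder V]
    (sees : V → V → Prop)
    (hsym : ∀ a b, sees a b → sees b a)
    (horder : ∀ a b c d : V, a < b → b < c → c < d → sees a c → sees b d → sees a d)
    (R B : Finset V) (hdisj : Disjoint R B)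
    (lamD : V → Prop) (lam : V → V)
    (hlam1 : ∀ w, lamD w → lam w ∈ R ∪ B ∧ lam w < w ∧ sees (lam w) w)
    (hlam2 : ∀ w g, g ∈ R ∪ B → g < w → sees g w → lamD w ∧ lam w ≤ g)
    (x z y : V)
    (hx : lamD x)
    (hzRB : z ∈ R ∪ B) (hzx : sees z x) (hz1 : lam x < z) (hz2 : z < x)
    (hcol : (z ∈ R ∧ lam x ∈ B) ∨ (z ∈ B ∧ lam x ∈ R))
    (hmin : ∀ z', z' ∈ R ∪ B → sees z' x → lam x < z' → z' < x →
      ((z' ∈ R ∧ lam x ∈ B) ∨ (z' ∈ B ∧ lam x ∈ R)) → z ≤ z')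
    (hy : lamD y) (h1 : lam x ≤ lam y) (h2 : lam y < z) (h3 : z < y) (h4 : y ≤ x) :
    sees (lam y) x := by
  rcases lt_or_eq_of_le h4 with hlt | heq
  · exact horder _ _ _ _ h2 h3 hlt (hlam1 y hy).2.2 hzx
  · subst heq; exact (hlam1 y hy).2.2
end
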